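/- Non-expressibility of realistic attraction: in the single-agent setting Agt = {1}, for every atomic proposition p ∈ Atm and every formula φ of L containing no occurrence of the realistic attraction operator RA, it is not the case that RA(1)p ↔ φ is valid, i.e., there exists a model (S,U) in which (S,U) ⊨ RA(1)p and (S,U) ⊭ φ, or vice versa. -/
import Mathlib


/-- The language L0 of explicit belief: atoms, negation, conjunction, explicit belief. -/
inductive L0 (Agt Atm : Type) : Type
  | atom : Atm → L0 Agt Atm
  | neg  : L0 Agt Atm → L0 Agt Atm
  | and  : L0 Agt Atm → L0 Agt Atm → L0 Agt Atm
  | bel  : Agt → L0 Agt Atm → L0 Agt Atm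

/-- Material implication in L0, as the usual abbreviation. -/
def L0.impl {Agt Atm : Type} (a b : L0 Agt Atm) : L0 Agt Atm := .neg (.and a (.neg b))

/-- A state: a belief base for each agent together with a valuation. -/
structure State (Agt Atm : Type) where
  base : Agt → Set (L0 Agt Atm)
  val  : Set Atm

/-- Satisfaction of an L0 formula at a state. -/
def sat0 {Agt Atm : Type} (S : State Agt Atm) : L0 Agt Atm → Prop
  | .atom p  => p ∈ S.val
  | .neg a   => ¬ sat0 S a
  | .and a b => sat0 S a ∧ sat0 S b
  | .bel i a => a ∈ S.base i

/-- Epistemic relation R(i): S' satisfies every formula in agent i's belief base at S. -/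
def epi {Agt Atm : Type} (i : Agt) (S S' : State Agt Atm) : Prop :=
  ∀ a ∈ S.base i, sat0 S' a

/-- Attraction relation A(i): S' satisfies some α with (α → rew i) in agent i's belief base. -/
def attr {Agt Atm : Type} (rew : Agt → Atm) (i : Agt) (S S' : State Agt Atm) : Prop :=
  ∃ a : L0 Agt Atm, (L0.impl a (.atom (rew i))) ∈ S.base i ∧ sat0 S' a

/-- Repulsion relation P(i): S' satisfies some α with (α → pun i) in agent i's belief base. -/
def repu {Agt Atm : Type} (pun : Agt → Atm) (i : Agt) (S S' : State Agt Atm) : Prop :=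
  ∃ a : L0 Agt Atm, (L0.impl a (.atom (pun i))) ∈ S.base i ∧ sat0 S' a

/-- The language L: L0 formulas, Boolean connectives, implicit belief `box`,
complete attraction `ca`, complete repulsion `cr`, realistic attraction `ra`,
realistic repulsion `rr`. -/
inductive Formula (Agt Atm : Type) : Type
  | emb : L0 Agt Atm → Formula Agt Atm
  | neg : Formula Agt Atm → Formula Agt Atm
  | and : Formula Agt Atm → Formula Agt Atm → Formula Agt Atm
  | box : Agt → Formula Agt Atm → Formula Agt Atm
  | ca  : Agt → Formula Agt Atm → Formula Agt Atm
  | cr  : Agt → Formula Agt Atm → Formula Agt Atm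
  | ra  : Agt → Formula Agt Atm → Formula Agt Atm
  | rr  : Agt → Formula Agt Atm → Formula Agt Atm

/-- Material implication in L. -/
def Formula.impF {Agt Atm : Type} (f g : Formula Agt Atm) : Formula Agt Atm :=
  .neg (.and f (.neg g))

/-- Biconditional in L. -/
def Formula.iffF {Agt Atm : Type} (f g : Formula Agt Atm) : Formula Agt Atm :=
  .and (f.impF g) (g.impF f)

/-- Disjunction in L: φ ∨ ψ := ¬(¬φ ∧ ¬ψ). -/
def Formula.orF {Agt Atm : Type} (f g : Formula Agt Atm) : Formula Agt Atm :=
  .neg (.and (.neg f) (.neg g))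

/-- Truth of an L formula at a state S relative to a context U. -/
def sat {Agt Atm : Type} (rew pun : Agt → Atm) (U : Set (State Agt Atm)) :
    State Agt Atm → Formula Agt Atm → Prop
  | S, .emb a   => sat0 S a
  | S, .neg f   => ¬ sat rew pun U S f
  | S, .and f g => sat rew pun U S f ∧ sat rew pun U S g
  | S, .box i f => ∀ S' ∈ U, epi i S S' → sat rew pun U S' f
  | S, .ca i f  => ∀ S' ∈ U, sat rew pun U S' f → attr rew i S S'
  | S, .cr i f  => ∀ S' ∈ U, sat rew pun U S' f → repu pun i S S'
  | S, .ra i f  => ∀ S' ∈ U, sat rew pun U S' f → epi i S S' → attr rew i S S'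
  | S, .rr i f  => ∀ S' ∈ U, sat rew pun U S' f → epi i S S' → repu pun i S S'

/-- Validity: truth at every model (S,U) with S ∈ U. -/
def valid {Agt Atm : Type} (rew pun : Agt → Atm) (f : Formula Agt Atm) : Prop :=
  ∀ (U : Set (State Agt Atm)) (S : State Agt Atm), S ∈ U → sat rew pun U S f

/-- φ contains no occurrence of the operator ra. -/
def RAFree {Agt Atm : Type} : Formula Agt Atm → Prop
  | .emb _ => True
  | .neg f => RAFree f
  | .and f g => RAFree f ∧ RAFree g
  | .box _ f => RAFree f
  | .ca _ f => RAFree f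
  | .cr _ f => RAFree f
  | .ra _ _ => False
  | .rr _ f => RAFree f

/-! ### Auxiliary material for the non-expressibility proof -/

namespace RAne

variable {Atm : Type}

/-- Atoms occurring in an L0 formula. -/
def atoms0 : L0 Unit Atm → Set Atm
  | .atom a => {a}
  | .neg f => atoms0 f
  | .and f g => atoms0 f ∪ atoms0 g
  | .bel _ f => atoms0 f

/-- Atoms occurring in an L formula. -/
def atomsF : Formula Unit Atm → Set Atm
  | .emb a => atoms0 a
  | .neg f => atomsF f
  | .and f g => atomsF f ∪ atomsF g
  | .box _ f => atomsF f
  | .ca _ f => atomsF f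
  | .cr _ f => atomsF f
  | .ra _ f => atomsF f
  | .rr _ f => atomsF f

lemma atoms0_finite (a : L0 Unit Atm) : (atoms0 a).Finite := by
  induction a with
  | atom a => simp [atoms0]
  | neg f ih => simpa [atoms0] using ih
  | and f g ihf ihg => simpa [atoms0] using ihf.union ihg
  | bel i f ih => simpa [atoms0] using ih

lemma atomsF_finite (f : Formula Unit Atm) : (atomsF f).Finite := by
  induction f with
  | emb a => simpa [atomsF] using atoms0_finite a
  | neg f ih => simpa [atomsF] using ih
  | and f g ihf ihg => simpa [atomsF] using ihf.union ihg
  | box i f ih => simpa [atomsF] using ih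
  | ca i f ih => simpa [atomsF] using ih
  | cr i f ih => simpa [atomsF] using ih
  | ra i f ih => simpa [atomsF] using ih
  | rr i f ih => simpa [atomsF] using ih

/-- The central state: believes `q → rew` and `s`. -/
def St (q r s : Atm) : State Unit Atm :=
  ⟨fun _ => {L0.impl (.atom q) (.atom r), .atom s}, ∅⟩

/-- A state with empty belief base and valuation `v`. -/
def Tv (v : Set Atm) : State Unit Atm := ⟨fun _ => ∅, v⟩

/-- Two states with the same belief bases agreeing on the atoms of `a`
satisfy the same L0 formula `a`. -/
lemma sat0_congr {X Y : State Unit Atm} (hb : X.base = Y.base) (a : L0 Unit Atm)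
    (hv : ∀ t ∈ atoms0 a, (t ∈ X.val ↔ t ∈ Y.val)) : sat0 X a ↔ sat0 Y a := by
  induction a with
  | atom t => simpa [sat0] using hv t (by simp [atoms0])
  | neg f ih => simp only [sat0]; exact not_congr (ih hv)
  | and f g ihf ihg =>
      simp only [sat0]
      exact and_congr (ihf fun t ht => hv t (by simp [atoms0, ht]))
        (ihg fun t ht => hv t (by simp [atoms0, ht]))
  | bel i f ih => simp [sat0, hb]

lemma epi_St (i : Unit) (q r s : Atm) (Y : State Unit Atm) :
    epi i (St q r s) Y ↔ ((q ∈ Y.val → r ∈ Y.val) ∧ s ∈ Y.val) := by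
  simp only [epi, St, Set.mem_insert_iff, Set.mem_singleton_iff]
  constructor
  · intro h
    have h1 := h _ (Or.inl rfl)
    have h2 := h _ (Or.inr rfl)
    simp only [L0.impl, sat0] at h1 h2
    exact ⟨fun hq => by tauto, h2⟩
  · rintro ⟨h1, h2⟩ a (rfl | rfl)
    · simp only [L0.impl, sat0]; tauto
    · simpa [sat0] using h2

lemma attr_St (rew : Unit → Atm) (i : Unit) (q s : Atm) (Y : State Unit Atm) :
    attr rew i (St q (rew ()) s) Y ↔ q ∈ Y.val := by
  constructor
  · rintro ⟨a, ha, hsa⟩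
    simp only [St, Set.mem_insert_iff, Set.mem_singleton_iff] at ha
    rcases ha with ha | ha
    · simp only [L0.impl, L0.neg.injEq, L0.and.injEq] at ha
      obtain ⟨rfl, -⟩ := ha
      simpa [sat0] using hsa
    · simp [L0.impl] at ha
  · intro h
    exact ⟨.atom q, by simp [St], by simpa [sat0] using h⟩

lemma not_repu_St (pun : Unit → Atm) (i : Unit) (q r s : Atm) (hr : r ≠ pun ())
    (Y : State Unit Atm) : ¬ repu pun i (St q r s) Y := by
  rintro ⟨a, ha, -⟩
  simp only [St, Set.mem_insert_iff, Set.mem_singleton_iff] at ha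
  rcases ha with ha | ha
  · simp only [L0.impl, L0.neg.injEq, L0.and.injEq] at ha
    obtain ⟨-, h⟩ := ha
    exact hr (by simpa using h.symm)
  · simp [L0.impl] at ha

lemma epi_Tv (i : Unit) (v : Set Atm) (Y : State Unit Atm) : epi i (Tv v) Y := by
  intro a ha
  simp [Tv] at ha

lemma not_attr_Tv (rew : Unit → Atm) (i : Unit) (v : Set Atm) (Y : State Unit Atm) :
    ¬ attr rew i (Tv v) Y := by
  rintro ⟨a, ha, -⟩
  simp [Tv] at ha

lemma not_repu_Tv (pun : Unit → Atm) (i : Unit) (v : Set Atm) (Y : State Unit Atm) :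
    ¬ repu pun i (Tv v) Y := by
  rintro ⟨a, ha, -⟩
  simp [Tv] at ha

/-- The two universes. -/
def U1 (p q r s : Atm) : Set (State Unit Atm) :=
  {St q r s, Tv {p, q, r, s}, Tv {p, r}}

def U2 (p q r s : Atm) : Set (State Unit Atm) :=
  {St q r s, Tv {p, q, r, s}, Tv {p, r, s}, Tv {p, r}}

lemma forall_U1 (p q r s : Atm) (P : State Unit Atm → Prop) :
    (∀ X ∈ U1 p q r s, P X) ↔
      (P (St q r s) ∧ P (Tv {p, q, r, s}) ∧ P (Tv {p, r})) := by
  simp [U1]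

lemma forall_U2 (p q r s : Atm) (P : State Unit Atm → Prop) :
    (∀ X ∈ U2 p q r s, P X) ↔
      (P (St q r s) ∧ P (Tv {p, q, r, s}) ∧ P (Tv {p, r, s}) ∧ P (Tv {p, r})) := by
  simp [U2]

lemma not_epi_St_St (rew : Unit → Atm) (q s : Atm) (i : Unit) :
    ¬ epi i (St q (rew ()) s) (St q (rew ()) s) := by
  rw [epi_St]; simp [St]

lemma epi_St_T1 (rew : Unit → Atm) (p q s : Atm) (i : Unit) :
    epi i (St q (rew ()) s) (Tv {p, q, rew (), s}) := by
  rw [epi_St]; simp [Tv]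

lemma epi_St_T2 (rew : Unit → Atm) (p q s : Atm)
    (hqp : q ≠ p) (hqr : q ≠ rew ()) (hqs : q ≠ s) (i : Unit) :
    epi i (St q (rew ()) s) (Tv {p, rew (), s}) := by
  rw [epi_St]; simp [Tv, hqp, hqr, hqs]

lemma not_epi_St_T3 (rew : Unit → Atm) (p q s : Atm)
    (hsp : s ≠ p) (hsr : s ≠ rew ()) (i : Unit) :
    ¬ epi i (St q (rew ()) s) (Tv {p, rew ()}) := by
  rw [epi_St]; simp [Tv, hsp, hsr]

lemma not_attr_St_St (rew : Unit → Atm) (q s : Atm) (i : Unit) :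
    ¬ attr rew i (St q (rew ()) s) (St q (rew ()) s) := by
  rw [attr_St]; simp [St]

lemma attr_St_T1 (rew : Unit → Atm) (p q s : Atm) (i : Unit) :
    attr rew i (St q (rew ()) s) (Tv {p, q, rew (), s}) := by
  rw [attr_St]; simp [Tv]

lemma not_attr_St_T2 (rew : Unit → Atm) (p q s : Atm)
    (hqp : q ≠ p) (hqr : q ≠ rew ()) (hqs : q ≠ s) (i : Unit) :
    ¬ attr rew i (St q (rew ()) s) (Tv {p, rew (), s}) := by
  rw [attr_St]; simp [Tv, hqp, hqr, hqs]

lemma not_attr_St_T3 (rew : Unit → Atm) (p q s : Atm)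
    (hqp : q ≠ p) (hqr : q ≠ rew ()) (i : Unit) :
    ¬ attr rew i (St q (rew ()) s) (Tv {p, rew ()}) := by
  rw [attr_St]; simp [Tv, hqp, hqr]

set_option maxHeartbeats 1000000 in
/-- Main agreement lemma: every RA-free formula avoiding the fresh atoms `q`, `s`
has the same truth value at the central state in both models, and the three
`T`-states are equivalent in, and across, the two models. -/
lemma key (rew pun : Unit → Atm) (p q s : Atm)
    (hrp : rew () ≠ pun ())
    (hqp : q ≠ p) (hqr : q ≠ rew ()) (hqs : q ≠ s)
    (hsp : s ≠ p) (hsr : s ≠ rew ()) :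
    ∀ f : Formula Unit Atm, RAFree f → q ∉ atomsF f → s ∉ atomsF f →
    ((sat rew pun (U1 p q (rew ()) s) (St q (rew ()) s) f ↔
      sat rew pun (U2 p q (rew ()) s) (St q (rew ()) s) f) ∧
     (sat rew pun (U1 p q (rew ()) s) (Tv {p, q, rew (), s}) f ↔
      sat rew pun (U2 p q (rew ()) s) (Tv {p, q, rew (), s}) f) ∧
     (sat rew pun (U1 p q (rew ()) s) (Tv {p, q, rew (), s}) f ↔
      sat rew pun (U1 p q (rew ()) s) (Tv {p, rew ()}) f) ∧
     (sat rew pun (U2 p q (rew ()) s) (Tv {p, q, rew (), s}) f ↔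
      sat rew pun (U2 p q (rew ()) s) (Tv {p, rew (), s}) f) ∧
     (sat rew pun (U2 p q (rew ()) s) (Tv {p, q, rew (), s}) f ↔
      sat rew pun (U2 p q (rew ()) s) (Tv {p, rew ()}) f)) := by
  have e1 := not_epi_St_St rew q s
  have e2 := epi_St_T1 rew p q s
  have e3 := epi_St_T2 rew p q s hqp hqr hqs
  have e4 := not_epi_St_T3 rew p q s hsp hsr
  have a1 := not_attr_St_St rew q s
  have a2 := attr_St_T1 rew p q s
  have a3 := not_attr_St_T2 rew p q s hqp hqr hqs
  have a4 := not_attr_St_T3 rew p q s hqp hqr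
  have r1 := not_repu_St pun (Atm := Atm)
  have r2 := not_repu_Tv pun (Atm := Atm)
  have eT := epi_Tv (Atm := Atm)
  have aT := not_attr_Tv rew (Atm := Atm)
  intro f
  induction f with
  | emb a =>
      intro _ hq hs
      have hq' : q ∉ atoms0 a := hq
      have hs' : s ∉ atoms0 a := hs
      have congr23 : sat0 (Tv ({p, q, rew (), s} : Set Atm)) a ↔
          sat0 (Tv ({p, rew ()} : Set Atm)) a := by
        refine sat0_congr (X := Tv {p, q, rew (), s}) (Y := Tv {p, rew ()})
          rfl a fun t ht => ?_
        have htq : t ≠ q := fun h => hq' (h ▸ ht)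
        have hts : t ≠ s := fun h => hs' (h ▸ ht)
        simp [Tv, htq, hts]
      have congr24 : sat0 (Tv ({p, q, rew (), s} : Set Atm)) a ↔
          sat0 (Tv ({p, rew (), s} : Set Atm)) a := by
        refine sat0_congr (X := Tv {p, q, rew (), s}) (Y := Tv {p, rew (), s})
          rfl a fun t ht => ?_
        have htq : t ≠ q := fun h => hq' (h ▸ ht)
        simp [Tv, htq]
      refine ⟨by simp only [sat], by simp only [sat],
        by simpa only [sat] using congr23, by simpa only [sat] using congr24,
        by simpa only [sat] using congr23⟩
  | neg f ih =>
      intro hf hq hs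
      obtain ⟨i1, i2, i3, i4, i5⟩ := ih hf hq hs
      simp only [sat]
      exact ⟨not_congr i1, not_congr i2, not_congr i3, not_congr i4, not_congr i5⟩
  | and f g ihf ihg =>
      intro hf hq hs
      have hq' : q ∉ atomsF f ∧ q ∉ atomsF g := by
        simpa [atomsF, not_or] using hq
      have hs' : s ∉ atomsF f ∧ s ∉ atomsF g := by
        simpa [atomsF, not_or] using hs
      obtain ⟨i1, i2, i3, i4, i5⟩ := ihf hf.1 hq'.1 hs'.1
      obtain ⟨j1, j2, j3, j4, j5⟩ := ihg hf.2 hq'.2 hs'.2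
      simp only [sat]
      exact ⟨and_congr i1 j1, and_congr i2 j2, and_congr i3 j3,
        and_congr i4 j4, and_congr i5 j5⟩
  | box i f ih =>
      intro hf hq hs
      obtain ⟨i1, i2, i3, i4, i5⟩ := ih hf hq hs
      simp only [sat, forall_U1, forall_U2, e1 i, e2 i, e3 i, e4 i, eT i,
        true_implies, false_implies, true_and, and_true]
      revert i1 i2 i3 i4 i5
      generalize sat rew pun (U1 p q (rew ()) s) (St q (rew ()) s) f = A1
      generalize sat rew pun (U1 p q (rew ()) s) (Tv {p, q, rew (), s}) f = B1
      generalize sat rew pun (U1 p q (rew ()) s) (Tv {p, rew ()}) f = C1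
      generalize sat rew pun (U2 p q (rew ()) s) (St q (rew ()) s) f = A2
      generalize sat rew pun (U2 p q (rew ()) s) (Tv {p, q, rew (), s}) f = B2
      generalize sat rew pun (U2 p q (rew ()) s) (Tv {p, rew (), s}) f = D2
      generalize sat rew pun (U2 p q (rew ()) s) (Tv {p, rew ()}) f = C2
      intro h1 h2 h3 h4 h5
      clear * - h1 h2 h3 h4 h5
      tauto
  | ca i f ih =>
      intro hf hq hs
      obtain ⟨i1, i2, i3, i4, i5⟩ := ih hf hq hs
      simp only [sat, forall_U1, forall_U2, a1 i, a2 i, a3 i, a4 i, aT i,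
        implies_true, true_and, and_true, iff_true, true_iff]
      revert i1 i2 i3 i4 i5
      generalize sat rew pun (U1 p q (rew ()) s) (St q (rew ()) s) f = A1
      generalize sat rew pun (U1 p q (rew ()) s) (Tv {p, q, rew (), s}) f = B1
      generalize sat rew pun (U1 p q (rew ()) s) (Tv {p, rew ()}) f = C1
      generalize sat rew pun (U2 p q (rew ()) s) (St q (rew ()) s) f = A2
      generalize sat rew pun (U2 p q (rew ()) s) (Tv {p, q, rew (), s}) f = B2
      generalize sat rew pun (U2 p q (rew ()) s) (Tv {p, rew (), s}) f = D2
      generalize sat rew pun (U2 p q (rew ()) s) (Tv {p, rew ()}) f = C2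
      intro h1 h2 h3 h4 h5
      clear * - h1 h2 h3 h4 h5
      tauto
  | cr i f ih =>
      intro hf hq hs
      obtain ⟨i1, i2, i3, i4, i5⟩ := ih hf hq hs
      simp only [sat, forall_U1, forall_U2, r1 i q (rew ()) s hrp, r2 i,
        implies_true, true_and, and_true]
      revert i1 i2 i3 i4 i5
      generalize sat rew pun (U1 p q (rew ()) s) (St q (rew ()) s) f = A1
      generalize sat rew pun (U1 p q (rew ()) s) (Tv {p, q, rew (), s}) f = B1
      generalize sat rew pun (U1 p q (rew ()) s) (Tv {p, rew ()}) f = C1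
      generalize sat rew pun (U2 p q (rew ()) s) (St q (rew ()) s) f = A2
      generalize sat rew pun (U2 p q (rew ()) s) (Tv {p, q, rew (), s}) f = B2
      generalize sat rew pun (U2 p q (rew ()) s) (Tv {p, rew (), s}) f = D2
      generalize sat rew pun (U2 p q (rew ()) s) (Tv {p, rew ()}) f = C2
      intro h1 h2 h3 h4 h5
      clear * - h1 h2 h3 h4 h5
      tauto
  | ra i f ih =>
      intro hf _ _
      exact absurd hf (by simp [RAFree])
  | rr i f ih =>
      intro hf hq hs
      obtain ⟨i1, i2, i3, i4, i5⟩ := ih hf hq hs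
      simp only [sat, forall_U1, forall_U2, r1 i q (rew ()) s hrp, r2 i,
        e1 i, e2 i, e3 i, e4 i, eT i,
        implies_true, true_implies, false_implies, true_and, and_true]
      revert i1 i2 i3 i4 i5
      generalize sat rew pun (U1 p q (rew ()) s) (St q (rew ()) s) f = A1
      generalize sat rew pun (U1 p q (rew ()) s) (Tv {p, q, rew (), s}) f = B1
      generalize sat rew pun (U1 p q (rew ()) s) (Tv {p, rew ()}) f = C1
      generalize sat rew pun (U2 p q (rew ()) s) (St q (rew ()) s) f = A2
      generalize sat rew pun (U2 p q (rew ()) s) (Tv {p, q, rew (), s}) f = B2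
      generalize sat rew pun (U2 p q (rew ()) s) (Tv {p, rew (), s}) f = D2
      generalize sat rew pun (U2 p q (rew ()) s) (Tv {p, rew ()}) f = C2
      intro h1 h2 h3 h4 h5
      clear * - h1 h2 h3 h4 h5
      tauto

end RAne

/-- Non-expressibility of realistic attraction in the single-agent setting:
for every atom p and every RA-free formula φ, RA(1)p ↔ φ is not valid. -/
theorem ra_not_expressible {Atm : Type} [Countable Atm] [Infinite Atm]
    (rew pun : Unit → Atm)
    (hdistinct : ∀ i j : Unit, rew i ≠ pun j)
    (p : Atm) (φ : Formula Unit Atm) (hφ : RAFree φ) :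
    ¬ valid rew pun ((Formula.ra () (.emb (.atom p))).iffF φ) := by
  intro hvalid
  classical
  have hrp : rew () ≠ pun () := hdistinct () ()
  -- choose fresh atoms q and s
  set A : Set Atm := RAne.atomsF φ ∪ {p, rew (), pun ()} with hAdef
  have hAfin : A.Finite :=
    (RAne.atomsF_finite φ).union
      ((Set.finite_singleton (pun ())).insert (rew ()) |>.insert p)
  obtain ⟨q, hqA⟩ := hAfin.infinite_compl.nonempty
  have hqA : q ∉ A := hqA
  have hBfin : (insert q A).Finite := hAfin.insert q
  obtain ⟨s, hsB⟩ := hBfin.infinite_compl.nonempty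
  have hsB : s ∉ insert q A := hsB
  have hsA : s ∉ A := fun h => hsB (Set.mem_insert_of_mem _ h)
  have hsq : s ≠ q := fun h => hsB (h ▸ Set.mem_insert q A)
  have hqφ : q ∉ RAne.atomsF φ := fun h => hqA (Set.mem_union_left _ h)
  have hsφ : s ∉ RAne.atomsF φ := fun h => hsA (Set.mem_union_left _ h)
  have hqp : q ≠ p := fun h => hqA (Set.mem_union_right _ (by simp [h]))
  have hqr : q ≠ rew () := fun h => hqA (Set.mem_union_right _ (by simp [h]))
  have hsp : s ≠ p := fun h => hsA (Set.mem_union_right _ (by simp [h]))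
  have hsr : s ≠ rew () := fun h => hsA (Set.mem_union_right _ (by simp [h]))
  have hqs : q ≠ s := hsq.symm
  obtain ⟨keyS, -⟩ :=
    RAne.key rew pun p q s hrp hqp hqr hqs hsp hsr φ hφ hqφ hsφ
  -- RA p holds at (St, U1)
  have hRA1 : sat rew pun (RAne.U1 p q (rew ()) s) (RAne.St q (rew ()) s)
      (Formula.ra () (.emb (.atom p))) := by
    intro S' hS' hp hepi
    simp only [RAne.U1, Set.mem_insert_iff, Set.mem_singleton_iff] at hS'
    rcases hS' with rfl | rfl | rfl
    · exact absurd hp (by simp [sat, sat0, RAne.St])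
    · rw [RAne.attr_St]; simp [RAne.Tv]
    · rw [RAne.epi_St] at hepi
      exact absurd hepi.2 (by simp [RAne.Tv, hsp, hsr])
  -- RA p fails at (St, U2)
  have hRA2 : ¬ sat rew pun (RAne.U2 p q (rew ()) s) (RAne.St q (rew ()) s)
      (Formula.ra () (.emb (.atom p))) := by
    intro h
    have hm : RAne.Tv ({p, rew (), s} : Set Atm) ∈ RAne.U2 p q (rew ()) s := by
      simp [RAne.U2]
    have := h _ hm (by simp [sat, sat0, RAne.Tv])
      (by rw [RAne.epi_St]; simp [RAne.Tv, hqp, hqr, hqs])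
    rw [RAne.attr_St] at this
    exact absurd this (by simp [RAne.Tv, hqp, hqr, hqs])
  have hm1 : RAne.St q (rew ()) s ∈ RAne.U1 p q (rew ()) s := by
    simp [RAne.U1]
  have hm2 : RAne.St q (rew ()) s ∈ RAne.U2 p q (rew ()) s := by
    simp [RAne.U2]
  have h1 := hvalid _ _ hm1
  have h2 := hvalid _ _ hm2
  simp only [Formula.iffF, Formula.impF, sat, not_and, not_not] at h1 h2
  have hφ1 : sat rew pun (RAne.U1 p q (rew ()) s) (RAne.St q (rew ()) s) φ :=
    h1.1 hRA1
  have hφ2 : sat rew pun (RAne.U2 p q (rew ()) s) (RAne.St q (rew ()) s) φ :=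
    keyS.mp hφ1
  exact hRA2 (h2.2 hφ2)
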